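/- arXiv:1505.07206 — 5 statements merged into one kernel-verified Lean document; each statement's English description precedes it below -/
import Mathlib

section
/- Let α > 2 and b > 0. For ξ² > 0 with b·ξ^{-4/α} ≥ 1, and channel powers σ_j² = (j/b)^{-α/2} for j ≥ 1, the total error ⌊b·ξ^{-4/α}⌋·ξ² + ∑_{j=⌊b·ξ^{-4/α}⌋+1}^{∞} (j/b)^{-α/2} is at most (bα/(α-2))·ξ^{2-4/α}·V(b·ξ^{-4/α}), where V(x) = (⌊x⌋/x)·(1 + (2/α)·((⌊x⌋/x)^{-α/2} - 1)). -/
/-! With `x = b ξ^{-4/α}` and `L = ⌊x⌋`, the right-hand side simplifies to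
`L ξ² + (2/(α-2)) b^{α/2} L^{1-α/2}`, so it suffices to bound the tail
`∑_{j > L} (j/b)^{-α/2} = b^{α/2} ∑_{j > L} j^{-α/2}` by the integral
`b^{α/2} ∫_L^∞ t^{-α/2} dt = (2/(α-2)) b^{α/2} L^{1-α/2}`. -/

open Real

lemma integral_rpow_neg_le {s L : ℝ} (hs : 1 < s) (hL : 0 < L) (n : ℕ) :
    ∫ t in L..L + n, t ^ (-s) ≤ L ^ (1 - s) / (s - 1) := by
  rw [integral_rpow (Or.inr ⟨by linarith, Set.notMem_uIcc_of_lt hL (by positivity)⟩),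
    show -s + 1 = 1 - s by ring, ← neg_sub s 1, div_neg, ← neg_div, neg_sub]
  gcongr
  exact sub_le_self _ (by positivity)

lemma tsum_add_rpow_neg_le {s L : ℝ} (hs : 1 < s) (hL : 0 < L) :
    ∑' j : ℕ, ((j : ℝ) + L + 1) ^ (-s) ≤ L ^ (1 - s) / (s - 1) := by
  refine Real.tsum_le_of_sum_range_le (fun j => by positivity) fun n => ?_
  have hanti : AntitoneOn (fun t : ℝ => t ^ (-s)) (Set.Icc L (L + n)) :=
    fun x hx y _ hxy => Real.rpow_le_rpow_of_nonpos (hL.trans_le hx.1) hxy (by linarith)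
  calc ∑ j ∈ Finset.range n, ((j : ℝ) + L + 1) ^ (-s)
      = ∑ j ∈ Finset.range n, (L + ((j + 1 : ℕ) : ℝ)) ^ (-s) := by
        congr! 2 with j; push_cast; ring
    _ ≤ ∫ t in L..L + n, t ^ (-s) := hanti.sum_le_integral
    _ ≤ L ^ (1 - s) / (s - 1) := integral_rpow_neg_le hs hL n

lemma tsum_div_rpow_neg_le {s b L : ℝ} (hs : 1 < s) (hb : 0 < b) (hL : 0 < L) :
    ∑' j : ℕ, (((j : ℝ) + L + 1) / b) ^ (-s) ≤ b ^ s * (L ^ (1 - s) / (s - 1)) := by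
  have hscale : ∀ j : ℕ, (((j : ℝ) + L + 1) / b) ^ (-s) = b ^ s * ((j : ℝ) + L + 1) ^ (-s) :=
    fun j => by
      rw [Real.div_rpow (by positivity) hb.le, Real.rpow_neg hb.le, div_inv_eq_mul, mul_comm]
  simp_rw [hscale, tsum_mul_left]
  exact mul_le_mul_of_nonneg_left (tsum_add_rpow_neg_le hs hL) (by positivity)

lemma quantization_bound_eq {α b ξ L : ℝ} (hα : 2 < α) (hb : 0 < b) (hξ : 0 < ξ) (hL : 0 < L) :
    (b * α / (α - 2)) * ξ ^ (2 - 4 / α) *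
        ((L / (b * ξ ^ (-(4 / α)))) *
          (1 + (2 / α) * ((L / (b * ξ ^ (-(4 / α)))) ^ (-(α / 2)) - 1))) =
      L * ξ ^ 2 + b ^ (α / 2) * (L ^ (1 - α / 2) / (α / 2 - 1)) := by
  have hξ' : 0 < ξ ^ (-(4 / α)) := Real.rpow_pos_of_pos hξ _
  have hx : (b * ξ ^ (-(4 / α))) ^ (α / 2) = b ^ (α / 2) / ξ ^ 2 := by
    rw [Real.mul_rpow hb.le hξ'.le, ← Real.rpow_mul hξ.le,
      show -(4 / α) * (α / 2) = -(2 : ℕ) by field_simp; norm_num,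
      Real.rpow_neg hξ.le, Real.rpow_natCast, ← div_eq_mul_inv]
  have hξpow : ξ ^ (2 - 4 / α) = ξ ^ 2 * ξ ^ (-(4 / α)) := by
    rw [sub_eq_add_neg, Real.rpow_add hξ, show (2 : ℝ) = (2 : ℕ) by norm_num, Real.rpow_natCast]
  have hLpow : L ^ (1 - α / 2) = L * L ^ (-(α / 2)) := by
    rw [sub_eq_add_neg, Real.rpow_add hL, Real.rpow_one]
  rw [Real.div_rpow hL.le (by positivity), Real.rpow_neg (by positivity : 0 ≤ b * ξ ^ (-(4 / α))),
    hx, hξpow, hLpow, Real.rpow_neg hL.le]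
  have : α - 2 ≠ 0 := by linarith
  field_simp
  ring

theorem stmt5 (α b ξ : ℝ) (hα : 2 < α) (hb : 0 < b) (hξ : 0 < ξ)
    (h1 : 1 ≤ b * ξ ^ (-(4 / α))) :
    (⌊b * ξ ^ (-(4 / α))⌋ : ℝ) * ξ ^ 2 +
        ∑' j : ℕ, (((j : ℝ) + (⌊b * ξ ^ (-(4 / α))⌋ : ℝ) + 1) / b) ^ (-(α / 2)) ≤
      (b * α / (α - 2)) * ξ ^ (2 - 4 / α) *
        (((⌊b * ξ ^ (-(4 / α))⌋ : ℝ) / (b * ξ ^ (-(4 / α)))) *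
          (1 + (2 / α) *
            (((⌊b * ξ ^ (-(4 / α))⌋ : ℝ) / (b * ξ ^ (-(4 / α)))) ^ (-(α / 2)) - 1))) := by
  have hL : (0 : ℝ) < ⌊b * ξ ^ (-(4 / α))⌋ := by
    exact_mod_cast Int.floor_pos.mpr h1
  rw [quantization_bound_eq hα hb hξ hL]
  gcongr
  exact tsum_div_rpow_neg_le (by linarith) hb hL
end

section
/- Let a > 0, c > 0, β > 0 and a positive random variable G with E[log₂ G] finite. Define R(ρ) = E[log₂(1 + ρG/(1 + ρ·c·ρ^{-β}·2^{-g(ρ)}))] where g(ρ) converges to a finite limit as ρ → ∞. Then lim_{ρ→∞} R(ρ)/log₂ ρ = min{1, β}. -/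
/-!
Write `D = 1 + ρ^{1-β} h(ρ)` with `h(ρ) = c·2^{-g(ρ)} → c·2^{-g∞} > 0`. Pulling `ρ/D` out of the
logarithm, `log(1 + ρG/D) = log ρ - log D + log(D/ρ + G)`. Since `β > 0`, `D/ρ → 0`, so by dominated
convergence (with dominating function `log 2 + |log G|`) the expectation of the last term tends to
`E[log G]` and is negligible against `log ρ`. Finally `ρ^{max(0, 1-β)}` times a bounded-away-from-zero
factor sandwiches `D`, so `log D = max(0, 1-β) log ρ + O(1)`, and `1 - max(0, 1-β) = min(1, β)`.
-/

open Real MeasureTheory ProbabilityTheory Filter Topology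

lemma abs_log_add_le_log_two_add {t x : ℝ} (ht₀ : 0 ≤ t) (ht₁ : t ≤ 1) (hx : 0 < x) :
    |log (t + x)| ≤ log 2 + |log x| := by
  rw [abs_le]
  constructor
  · linarith [log_le_log hx (by linarith : x ≤ t + x), neg_abs_le (log x),
      log_nonneg one_le_two]
  · have hmax : log (max 1 x) ≤ |log x| := by
      rcases le_total x 1 with h | h
      · simp [max_eq_left h]
      · simpa [max_eq_right h] using le_abs_self (log x)
    calc log (t + x) ≤ log (2 * max 1 x) :=
          log_le_log (by linarith) (by linarith [le_max_left 1 x, le_max_right 1 x])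
      _ = log 2 + log (max 1 x) := log_mul two_ne_zero (by positivity)
      _ ≤ log 2 + |log x| := by linarith

lemma log_one_add_mul_div {ρ D x : ℝ} (hρ : 0 < ρ) (hD : 0 < D) (hx : 0 < x) :
    log (1 + ρ * x / D) = log ρ - log D + log (D / ρ + x) := by
  rw [show 1 + ρ * x / D = ρ * (D / ρ + x) / D by field_simp,
    log_div (by positivity) hD.ne', log_mul hρ.ne' (by positivity)]
  ring

lemma rpow_max_zero_mul_min_one_le {ρ s y : ℝ} (hρ : 1 ≤ ρ) (hy : 0 ≤ y) :
    ρ ^ max 0 s * min 1 y ≤ 1 + ρ ^ s * y := by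
  have hρs : 0 ≤ ρ ^ s := rpow_nonneg (by linarith) s
  rcases le_total s 0 with hs | hs
  · rw [max_eq_left hs, rpow_zero, one_mul]
    linarith [min_le_left 1 y, mul_nonneg hρs hy]
  · rw [max_eq_right hs]
    nlinarith [min_le_right 1 y]

lemma one_add_rpow_mul_le {ρ s y : ℝ} (hρ : 1 ≤ ρ) (hy : 0 ≤ y) :
    1 + ρ ^ s * y ≤ ρ ^ max 0 s * (1 + y) := by
  have h₁ : 1 ≤ ρ ^ max 0 s := one_le_rpow hρ (le_max_left _ _)
  have h₂ : ρ ^ s ≤ ρ ^ max 0 s := rpow_le_rpow_of_exponent_le hρ (le_max_right _ _)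
  nlinarith

lemma tendsto_mul_log_add_div_log {m A : ℝ} {u : ℝ → ℝ} (hu : Tendsto u atTop (𝓝 A)) :
    Tendsto (fun ρ => (m * log ρ + u ρ) / log ρ) atTop (𝓝 m) := by
  have h := tendsto_const_nhds (x := m).add (hu.div_atTop tendsto_log_atTop)
  rw [add_zero] at h
  refine h.congr' ?_
  filter_upwards [eventually_gt_atTop 1] with ρ hρ
  field_simp [(log_pos hρ).ne']

lemma tendsto_log_one_add_rpow_mul_div_log {s L : ℝ} {h : ℝ → ℝ}
    (hh : Tendsto h atTop (𝓝 L)) (hL : 0 < L) :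
    Tendsto (fun ρ => log (1 + ρ ^ s * h ρ) / log ρ) atTop (𝓝 (max 0 s)) := by
  have hlow : Tendsto (fun ρ => log (min 1 (h ρ))) atTop (𝓝 (log (min 1 L))) :=
    (continuousAt_log (by positivity)).tendsto.comp (tendsto_const_nhds.min hh)
  have hup : Tendsto (fun ρ => log (1 + h ρ)) atTop (𝓝 (log (1 + L))) :=
    (continuousAt_log (by positivity)).tendsto.comp (tendsto_const_nhds.add hh)
  have hlarge := (eventually_gt_atTop 1).and (hh.eventually (eventually_gt_nhds hL))
  refine tendsto_of_tendsto_of_tendsto_of_le_of_le' (tendsto_mul_log_add_div_log hlow)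
    (tendsto_mul_log_add_div_log hup) ?_ ?_
  · filter_upwards [hlarge] with ρ ⟨hρ, hhρ⟩
    refine div_le_div_of_nonneg_right ?_ (log_pos hρ).le
    rw [← log_rpow (by linarith), ← log_mul (by positivity) (by positivity)]
    exact log_le_log (by positivity) (rpow_max_zero_mul_min_one_le hρ.le hhρ.le)
  · filter_upwards [hlarge] with ρ ⟨hρ, hhρ⟩
    refine div_le_div_of_nonneg_right ?_ (log_pos hρ).le
    rw [← log_rpow (by linarith), ← log_mul (by positivity) (by positivity)]
    exact log_le_log (by positivity) (one_add_rpow_mul_le hρ.le hhρ.le)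

section Expectation

variable {Ω : Type*} [MeasurableSpace Ω] {μ : Measure Ω} {G : Ω → ℝ}

lemma aemeasurable_of_integrable_log (hG : ∀ ω, 0 < G ω)
    (hlog : Integrable (fun ω => log (G ω)) μ) : AEMeasurable G μ := by
  simpa only [exp_log (hG _)] using hlog.aemeasurable.exp

lemma integrable_log_add [IsFiniteMeasure μ] (hG : ∀ ω, 0 < G ω)
    (hlog : Integrable (fun ω => log (G ω)) μ) {t : ℝ} (ht₀ : 0 ≤ t) (ht₁ : t ≤ 1) :
    Integrable (fun ω => log (t + G ω)) μ :=
  ((integrable_const (log 2)).add hlog.abs).mono'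
    ((aemeasurable_of_integrable_log hG hlog).const_add t).log.aestronglyMeasurable
    (ae_of_all _ fun ω => abs_log_add_le_log_two_add ht₀ ht₁ (hG ω))

lemma tendsto_integral_log_add [IsFiniteMeasure μ] {ι : Type*} {l : Filter ι}
    [l.IsCountablyGenerated]
    (hG : ∀ ω, 0 < G ω) (hlog : Integrable (fun ω => log (G ω)) μ) {φ : ι → ℝ}
    (hφ : Tendsto φ l (𝓝 0)) (hφ₀ : ∀ᶠ i in l, 0 ≤ φ i) :
    Tendsto (fun i => ∫ ω, log (φ i + G ω) ∂μ) l (𝓝 (∫ ω, log (G ω) ∂μ)) := by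
  have hφ₁ : ∀ᶠ i in l, φ i ≤ 1 := hφ.eventually (eventually_le_nhds one_pos)
  refine tendsto_integral_filter_of_dominated_convergence (fun ω => log 2 + |log (G ω)|) ?_ ?_
    ((integrable_const _).add hlog.abs) (ae_of_all _ fun ω => ?_)
  · filter_upwards [hφ₀, hφ₁] with i h₀ h₁
    exact (integrable_log_add hG hlog h₀ h₁).aestronglyMeasurable
  · filter_upwards [hφ₀, hφ₁] with i h₀ h₁
    exact ae_of_all _ fun ω => abs_log_add_le_log_two_add h₀ h₁ (hG ω)
  · have hφG := hφ.add_const (G ω)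
    rw [zero_add] at hφG
    exact (continuousAt_log (hG ω).ne').tendsto.comp hφG

theorem tendsto_integral_log_one_add_div_div_log [IsProbabilityMeasure μ]
    (hG : ∀ ω, 0 < G ω) (hlog : Integrable (fun ω => log (G ω)) μ)
    {s L : ℝ} (hs : s < 1) {h : ℝ → ℝ} (hh : Tendsto h atTop (𝓝 L)) (hL : 0 < L) :
    Tendsto (fun ρ => (∫ ω, log (1 + ρ * G ω / (1 + ρ ^ s * h ρ)) ∂μ) / log ρ) atTop
      (𝓝 (1 - max 0 s)) := by
  set D : ℝ → ℝ := fun ρ => 1 + ρ ^ s * h ρ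
  have hlarge : ∀ᶠ ρ in atTop, 1 < ρ ∧ 0 < h ρ :=
    (eventually_gt_atTop 1).and (hh.eventually (eventually_gt_nhds hL))
  have hDpos : ∀ᶠ ρ in atTop, 0 < D ρ := by
    filter_upwards [hlarge] with ρ ⟨hρ, hhρ⟩
    have : 0 < ρ ^ s := rpow_pos_of_pos (by linarith) s
    positivity
  have hφ : Tendsto (fun ρ => D ρ / ρ) atTop (𝓝 0) := by
    have h₀ : Tendsto (fun ρ : ℝ => ρ⁻¹ + ρ ^ (-(1 - s)) * h ρ) atTop (𝓝 (0 + 0 * L)) :=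
      tendsto_inv_atTop_zero.add ((tendsto_rpow_neg_atTop (by linarith)).mul hh)
    rw [zero_mul, add_zero] at h₀
    refine h₀.congr' ?_
    filter_upwards [eventually_gt_atTop 0] with ρ hρ
    rw [neg_sub, rpow_sub hρ, rpow_one]
    field_simp
    rfl
  have hφ₀ : ∀ᶠ ρ in atTop, 0 ≤ D ρ / ρ := by
    filter_upwards [hlarge, hDpos] with ρ ⟨hρ, _⟩ hD
    exact div_nonneg hD.le (by linarith)
  have hφ₁ : ∀ᶠ ρ in atTop, D ρ / ρ ≤ 1 := hφ.eventually (eventually_le_nhds one_pos)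
  have hI := (tendsto_integral_log_add hG hlog hφ hφ₀).div_atTop tendsto_log_atTop
  have hlogD := tendsto_log_one_add_rpow_mul_div_log (s := s) hh hL
  have hsplit : ∀ᶠ ρ in atTop, 1 - log (D ρ) / log ρ + (∫ ω, log (D ρ / ρ + G ω) ∂μ) / log ρ
      = (∫ ω, log (1 + ρ * G ω / D ρ) ∂μ) / log ρ := by
    filter_upwards [hlarge, hDpos, hφ₀, hφ₁] with ρ ⟨hρ, _⟩ hD h₀ h₁
    have hpt := fun ω => log_one_add_mul_div (zero_lt_one.trans hρ) hD (hG ω)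
    simp_rw [hpt]
    rw [integral_add (integrable_const _) (integrable_log_add hG hlog h₀ h₁), integral_const,
      probReal_univ, one_smul]
    field_simp [(log_pos hρ).ne']
  simpa using ((tendsto_const_nhds (x := (1 : ℝ))).sub hlogD).add hI |>.congr' hsplit

end Expectation

theorem stmt9_general {Ω : Type*} [MeasureSpace Ω] [IsProbabilityMeasure (ℙ : Measure Ω)]
    (c β : ℝ) (hc : 0 < c) (hβ : 0 < β)
    (G : Ω → ℝ) (hGpos : ∀ ω, 0 < G ω)
    (hGint : Integrable (fun ω => Real.logb 2 (G ω)))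
    (g : ℝ → ℝ) (ginf : ℝ) (hg : Tendsto g atTop (nhds ginf)) :
    Tendsto
      (fun ρ : ℝ =>
        (∫ ω, Real.logb 2
            (1 + ρ * G ω / (1 + ρ * c * ρ ^ (-β) * (2 : ℝ) ^ (-(g ρ))))) /
          Real.logb 2 ρ)
      atTop (nhds (min 1 β)) := by
  have hlog : Integrable (fun ω => log (G ω)) := by
    simpa [logb, div_mul_cancel₀ _ (log_pos one_lt_two).ne'] using hGint.mul_const (log 2)
  have hh : Tendsto (fun ρ => c * (2 : ℝ) ^ (-(g ρ))) atTop (𝓝 (c * (2 : ℝ) ^ (-ginf))) :=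
    tendsto_const_nhds.mul ((continuousAt_const_rpow two_ne_zero).tendsto.comp hg.neg)
  have h := tendsto_integral_log_one_add_div_div_log hGpos hlog (by linarith : 1 - β < 1) hh
    (by positivity)
  rw [← min_sub_sub_left, sub_zero, sub_sub_cancel] at h
  refine h.congr' ?_
  filter_upwards [eventually_gt_atTop 0] with ρ hρ
  have hD : ρ * c * ρ ^ (-β) * (2 : ℝ) ^ (-(g ρ)) = ρ ^ (1 - β) * (c * (2 : ℝ) ^ (-(g ρ))) := by
    rw [sub_eq_add_neg, rpow_add hρ, rpow_one]
    ring
  simp only [hD, logb, integral_div]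
  exact (div_div_div_cancel_right₀ (log_pos one_lt_two).ne' _ _).symm

theorem stmt9 {Ω : Type*} [MeasureSpace Ω] [IsProbabilityMeasure (ℙ : Measure Ω)]
    (a c β : ℝ) (ha : 0 < a) (hc : 0 < c) (hβ : 0 < β)
    (G : Ω → ℝ) (hGmeas : Measurable G) (hGpos : ∀ ω, 0 < G ω)
    (hGint : Integrable (fun ω => Real.logb 2 (G ω)))
    (g : ℝ → ℝ) (ginf : ℝ) (hg : Tendsto g atTop (nhds ginf)) :
    Tendsto
      (fun ρ : ℝ =>
        (∫ ω, Real.logb 2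
            (1 + ρ * G ω / (1 + ρ * c * ρ ^ (-β) * (2 : ℝ) ^ (-(g ρ))))) /
          Real.logb 2 ρ)
      atTop (nhds (min 1 β)) :=
  stmt9_general c β hc hβ G hGpos hGint g ginf hg
end

section
/- Let α > 2, b > 0, T > 0, Q ≥ 0, and let a positive random variable G have E[log₂ G] finite. Define, for ξ ∈ (0, (1/b)^{α/4}), F(ξ) = (b·ξ^{-4/α}/(2T))·(α·log₂ e + 2Q) - (α·log₂ e)/(2T) and R(ξ) = E[log₂(1 + G/((α/(α-2))·b·ξ^{2-4/α}·c₀))] where c₀ = 1 + (2/α)(2^{α/2}-1). Then lim_{ξ→0⁺} R(ξ)/log₂ F(ξ) = α/2 - 1. -/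
/-!
With `u = -log₂ ξ → ∞`, `p = 2 - 4/α`, `q = 4/α` and `C = (α/(α-2)) b c₀`, pulling `ξ^p` out of
the numerator's logarithm gives `R(ξ) = p u + (E[log₂(C ξ^p + G)] - log₂ C)`, where the bracket
stays bounded because `log₂ G ≤ log₂(c + G) ≤ log₂(C + G)` for `0 < c ≤ C`, both ends being
integrable. Likewise `F(ξ) = ξ^{-q} (A - B ξ^q)` with `A > 0`, so `log₂ F(ξ) = q u + log₂(A - B ξ^q)`
and the last term converges to `log₂ A`. Hence the ratio tends to `p / q = α/2 - 1`.
-/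

open Real MeasureTheory ProbabilityTheory Filter Asymptotics Topology Set

theorem tendsto_add_mul_div_add_mul_of_isLittleO {ι 𝕜 : Type*} [NormedField 𝕜] {l : Filter ι}
    {u a d : ι → 𝕜} (hu : ∀ᶠ x in l, u x ≠ 0) (ha : a =o[l] u) (hd : d =o[l] u) (p : 𝕜) {q : 𝕜}
    (hq : q ≠ 0) :
    Tendsto (fun x => (a x + p * u x) / (d x + q * u x)) l (𝓝 (p / q)) := by
  have h := (ha.tendsto_div_nhds_zero.const_add p).div (hd.tendsto_div_nhds_zero.const_add q)
    (by simpa using hq)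
  simp only [add_zero] at h
  refine h.congr' (hu.mono fun x hx => ?_)
  simp only [Pi.div_apply]
  field_simp
  ring

theorem Real.logb_add_le {β c g : ℝ} (hβ : 1 < β) (hc : 0 < c) (hg : 0 < g) :
    logb β (c + g) ≤ logb β 2 + |logb β c| + |logb β g| := by
  have hle : ∀ {x y : ℝ}, 0 < x → x ≤ y → logb β (x + y) ≤ logb β 2 + logb β y :=
    fun hx hxy => by
      rw [← logb_mul two_ne_zero (by linarith)]
      exact logb_le_logb_of_le hβ (by linarith) (by linarith)
  rcases le_total c g with h | h
  · linarith [hle hc h, le_abs_self (logb β g), abs_nonneg (logb β c)]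
  · linarith [add_comm g c ▸ hle hg h, le_abs_self (logb β c), abs_nonneg (logb β g)]

section LogIntegrals

variable {Ω : Type*} [MeasurableSpace Ω] {μ : Measure Ω} {β : ℝ} {G : Ω → ℝ}

theorem integrable_logb_const_add [IsFiniteMeasure μ] (hβ : 1 < β) (hGmeas : Measurable G)
    (hGpos : ∀ ω, 0 < G ω) (hGint : Integrable (fun ω => logb β (G ω)) μ) {c : ℝ} (hc : 0 < c) :
    Integrable (fun ω => logb β (c + G ω)) μ := by
  refine (hGint.abs.add (integrable_const (logb β 2 + |logb β c|))).mono'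
    ((measurable_log.comp (measurable_const.add hGmeas)).div_const _).aestronglyMeasurable
    (ae_of_all _ fun ω => ?_)
  have hlo : logb β (G ω) ≤ logb β (c + G ω) :=
    logb_le_logb_of_le hβ (hGpos ω) (by linarith)
  rw [Pi.add_apply, norm_eq_abs, abs_le]
  constructor
  · linarith [neg_abs_le (logb β (G ω)), abs_nonneg (logb β c),
      logb_nonneg hβ one_le_two]
  · linarith [logb_add_le hβ hc (hGpos ω)]

theorem integral_logb_const_add_mem_Icc [IsFiniteMeasure μ] (hβ : 1 < β) (hGmeas : Measurable G)
    (hGpos : ∀ ω, 0 < G ω) (hGint : Integrable (fun ω => logb β (G ω)) μ) {c C : ℝ}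
    (hc : 0 < c) (hcC : c ≤ C) :
    ∫ ω, logb β (c + G ω) ∂μ ∈
      Icc (∫ ω, logb β (G ω) ∂μ) (∫ ω, logb β (C + G ω) ∂μ) := by
  have hint := integrable_logb_const_add hβ hGmeas hGpos hGint hc
  refine ⟨integral_mono hGint hint fun ω => ?_,
    integral_mono hint (integrable_logb_const_add hβ hGmeas hGpos hGint (hc.trans_le hcC))
      fun ω => ?_⟩
  · exact logb_le_logb_of_le hβ (hGpos ω) (by linarith [hGpos ω])
  · exact logb_le_logb_of_le hβ (by linarith [hGpos ω]) (by linarith)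

theorem isBigO_integral_logb_mul_rpow_add [IsFiniteMeasure μ] (hβ : 1 < β)
    (hGmeas : Measurable G) (hGpos : ∀ ω, 0 < G ω)
    (hGint : Integrable (fun ω => logb β (G ω)) μ) {C p : ℝ} (hC : 0 < C) (hp : 0 < p) :
    (fun ξ : ℝ => ∫ ω, logb β (C * ξ ^ p + G ω) ∂μ) =O[𝓝[>] 0] (fun _ => (1 : ℝ)) := by
  refine IsBigO.of_bound (max |∫ ω, logb β (G ω) ∂μ| |∫ ω, logb β (C + G ω) ∂μ|) ?_
  filter_upwards [Ioo_mem_nhdsGT one_pos] with ξ ⟨hξ0, hξ1⟩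
  obtain ⟨hlo, hhi⟩ := integral_logb_const_add_mem_Icc hβ hGmeas hGpos hGint
    (by positivity : 0 < C * ξ ^ p) (mul_le_of_le_one_right hC.le (rpow_le_one hξ0.le hξ1.le hp.le))
  simpa using abs_le_max_abs_abs hlo hhi

theorem integral_logb_one_add_div [IsProbabilityMeasure μ] (hGpos : ∀ ω, 0 < G ω) {x : ℝ}
    (hx : 0 < x) (hint : Integrable (fun ω => logb β (x + G ω)) μ) :
    ∫ ω, logb β (1 + G ω / x) ∂μ = ∫ ω, logb β (x + G ω) ∂μ - logb β x := by
  have hpt : ∀ ω, logb β (1 + G ω / x) = logb β (x + G ω) - logb β x := fun ω => by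
    rw [← logb_div (by linarith [hGpos ω]) hx.ne']
    congr 1
    field_simp
  simp_rw [hpt]
  rw [integral_sub hint (integrable_const _), integral_const]
  simp

theorem integral_logb_one_add_div_mul_rpow [IsProbabilityMeasure μ] (hβ : 1 < β)
    (hGmeas : Measurable G) (hGpos : ∀ ω, 0 < G ω)
    (hGint : Integrable (fun ω => logb β (G ω)) μ) {C p ξ : ℝ} (hC : 0 < C) (hξ : 0 < ξ) :
    ∫ ω, logb β (1 + G ω / (C * ξ ^ p)) ∂μ =
      ((∫ ω, logb β (C * ξ ^ p + G ω) ∂μ) - logb β C) + p * -logb β ξ := by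
  have hξp : 0 < ξ ^ p := rpow_pos_of_pos hξ p
  rw [integral_logb_one_add_div hGpos (by positivity)
    (integrable_logb_const_add hβ hGmeas hGpos hGint (by positivity)),
    logb_mul hC.ne' hξp.ne', logb_rpow_eq_mul_logb_of_pos hξ]
  ring

end LogIntegrals

theorem Real.logb_mul_rpow_neg_sub {β A B q ξ : ℝ} (hξ : 0 < ξ) (hBA : B * ξ ^ q < A) :
    logb β (A * ξ ^ (-q) - B) = logb β (A - B * ξ ^ q) + q * -logb β ξ := by
  have hξq : 0 < ξ ^ q := rpow_pos_of_pos hξ q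
  have h : A * ξ ^ (-q) - B = (A - B * ξ ^ q) / ξ ^ q := by
    rw [rpow_neg hξ.le]
    field_simp
  rw [h, logb_div (by linarith) hξq.ne', logb_rpow_eq_mul_logb_of_pos hξ]
  ring

theorem tendsto_integral_logb_one_add_div_div_logb {Ω : Type*} [MeasurableSpace Ω]
    {μ : Measure Ω} [IsProbabilityMeasure μ] {β : ℝ} (hβ : 1 < β) {G : Ω → ℝ}
    (hGmeas : Measurable G) (hGpos : ∀ ω, 0 < G ω)
    (hGint : Integrable (fun ω => logb β (G ω)) μ) {A C p q : ℝ} (B : ℝ) (hC : 0 < C)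
    (hp : 0 < p) (hA : 0 < A) (hq : 0 < q) :
    Tendsto (fun ξ : ℝ => (∫ ω, logb β (1 + G ω / (C * ξ ^ p)) ∂μ) / logb β (A * ξ ^ (-q) - B))
      (𝓝[>] 0) (𝓝 (p / q)) := by
  have hu : Tendsto (fun ξ : ℝ => -logb β ξ) (𝓝[>] 0) atTop :=
    tendsto_neg_atBot_atTop.comp (tendsto_logb_nhdsGT_zero hβ)
  have hone : (fun _ => (1 : ℝ)) =o[𝓝[>] 0] (fun ξ : ℝ => -logb β ξ) :=
    (isLittleO_one_left_iff ℝ).2 (tendsto_norm_atTop_atTop.comp hu)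
  have hBξ : Tendsto (fun ξ : ℝ => B * ξ ^ q) (𝓝[>] 0) (𝓝 0) := by
    simpa [zero_rpow hq.ne'] using
      ((continuousAt_rpow_const 0 q (Or.inr hq.le)).tendsto.mono_left nhdsWithin_le_nhds).const_mul B
  have hlogA : Tendsto (fun ξ : ℝ => logb β (A - B * ξ ^ q)) (𝓝[>] 0) (𝓝 (logb β A)) :=
    ((continuousAt_log hA.ne').div_const _).tendsto.comp (by simpa using hBξ.const_sub A)
  have hlim := tendsto_add_mul_div_add_mul_of_isLittleO (hu.eventually_ne_atTop 0)
    (((isBigO_integral_logb_mul_rpow_add hβ hGmeas hGpos hGint hC hp).sub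
      (isBigO_const_one ℝ (logb β C) _)).trans_isLittleO hone)
    ((hlogA.isBigO_one ℝ).trans_isLittleO hone) p hq.ne'
  refine hlim.congr' ?_
  filter_upwards [self_mem_nhdsWithin, hBξ.eventually_lt_const hA] with ξ (hξ : 0 < ξ) hBA
  rw [integral_logb_one_add_div_mul_rpow hβ hGmeas hGpos hGint hC hξ,
    logb_mul_rpow_neg_sub hξ hBA]

theorem stmt10 {Ω : Type*} [MeasureSpace Ω] [IsProbabilityMeasure (ℙ : Measure Ω)]
    (α b T Q : ℝ) (hα : 2 < α) (hb : 0 < b) (hT : 0 < T) (hQ : 0 ≤ Q)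
    (G : Ω → ℝ) (hGmeas : Measurable G) (hGpos : ∀ ω, 0 < G ω)
    (hGint : Integrable (fun ω => Real.logb 2 (G ω))) :
    Tendsto
      (fun ξ : ℝ =>
        (∫ ω, Real.logb 2
            (1 + G ω /
              ((α / (α - 2)) * b * ξ ^ (2 - 4 / α) *
                (1 + (2 / α) * ((2 : ℝ) ^ (α / 2) - 1))))) /
          Real.logb 2
            ((b * ξ ^ (-(4 / α)) / (2 * T)) * (α * Real.logb 2 (Real.exp 1) + 2 * Q) -
              α * Real.logb 2 (Real.exp 1) / (2 * T)))
      (nhdsWithin 0 (Set.Ioo 0 ((1 / b) ^ (α / 4)))) (nhds (α / 2 - 1)) := by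
  have hα0 : 0 < α := by linarith
  have hp : 0 < 2 - 4 / α := by rw [sub_pos, div_lt_iff₀ hα0]; linarith
  have hC : 0 < α / (α - 2) * b * (1 + 2 / α * ((2 : ℝ) ^ (α / 2) - 1)) := by
    have : (1 : ℝ) ≤ 2 ^ (α / 2) := one_le_rpow one_le_two (by positivity)
    have : 0 < α - 2 := by linarith
    positivity
  have hL : 0 < logb 2 (exp 1) := logb_pos one_lt_two (one_lt_exp_iff.2 one_pos)
  have hlim := tendsto_integral_logb_one_add_div_div_logb one_lt_two hGmeas hGpos hGint
    (α * logb 2 (exp 1) / (2 * T)) hC hp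
    (by positivity : 0 < b / (2 * T) * (α * logb 2 (exp 1) + 2 * Q)) (by positivity : 0 < 4 / α)
  rw [show α / 2 - 1 = (2 - 4 / α) / (4 / α) by field_simp; ring]
  refine (hlim.congr fun ξ => ?_).mono_left (nhdsWithin_mono _ Ioo_subset_Ioi_self)
  congr 3
  · funext ω
    congr 3
    ring
  · ring
end

section
/- Let α > 2, b ≥ 1, T > 0, Q ≥ 0. For ξ ∈ (0,1] with L := ⌊b·ξ^{-4/α}⌋ ≥ 1 and σ_j² = (j/b)^{-α/2}, the total feedback rate ∑_{j=1}^{L} (1/T)·(Q + log₂(σ_j²/ξ²)) is bounded above by (α·log₂ e/(2T))·(b·ξ^{-4/α} - 1) + (b·ξ^{-4/α}·Q)/T. -/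
/-!
With `x = b ξ^(-4/α)` and `L = ⌊x⌋`, the `j`-th rate is `Q/T + α/(2T ln 2) · (ln x - ln j)`.
The constant parts contribute `L Q / T ≤ x Q / T`. For the logarithmic parts, the
integral-type estimate `∑_{j ≤ L} ln j ≥ L ln L - L + 1` together with
`L (ln x - ln L) ≤ x - L` gives `∑_{j ≤ L} (ln x - ln j) ≤ x - 1`. Both estimates are
instances of `y (ln x - ln y) ≤ x - y`, i.e. of `ln t ≤ t - 1`.
-/

open Real Finset

lemma mul_log_sub_log_le_sub {x y : ℝ} (hx : 0 < x) (hy : 0 < y) :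
    y * (log x - log y) ≤ x - y := by
  rw [← log_div hx.ne' hy.ne']
  calc y * log (x / y) ≤ y * (x / y - 1) :=
        mul_le_mul_of_nonneg_left (log_le_sub_one_of_pos (by positivity)) hy.le
    _ = x - y := by field_simp

lemma mul_log_sub_add_one_le_sum_log {L : ℕ} (hL : 1 ≤ L) :
    (L : ℝ) * log L - L + 1 ≤ ∑ j ∈ Icc 1 L, log j := by
  induction L, hL using Nat.le_induction with
  | base => simp
  | succ n hn ih =>
    rw [sum_Icc_succ_top (by omega)]
    have hstep := mul_log_sub_log_le_sub (x := n + 1) (y := n) (by positivity)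
      (by exact_mod_cast hn)
    push_cast
    linarith

lemma sum_log_sub_log_le {x : ℝ} {L : ℕ} (hL : 1 ≤ L) (hLx : (L : ℝ) ≤ x) :
    ∑ j ∈ Icc 1 L, (log x - log j) ≤ x - 1 := by
  have hL0 : (0 : ℝ) < L := by exact_mod_cast hL
  have hlast := mul_log_sub_log_le_sub (hL0.trans_le hLx) hL0
  have hsum := mul_log_sub_add_one_le_sum_log hL
  rw [sum_sub_distrib, sum_const, Nat.card_Icc, Nat.add_sub_cancel, nsmul_eq_mul]
  linarith

lemma logb_rpow_div_sq_eq {α b ξ j : ℝ} (hα : α ≠ 0) (hb : 0 < b) (hξ : 0 < ξ) (hj : 0 < j) :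
    logb 2 ((j / b) ^ (-(α / 2)) / ξ ^ 2) =
      α / (2 * log 2) * (log (b * ξ ^ (-(4 / α))) - log j) := by
  rw [logb, log_div (by positivity) (by positivity), log_rpow (by positivity),
    log_div hj.ne' hb.ne', log_pow, log_mul hb.ne' (by positivity), log_rpow hξ]
  field_simp
  ring

theorem stmt16_general (α b T Q ξ : ℝ) (hα : 2 < α) (hb : 1 ≤ b) (hT : 0 < T) (hQ : 0 ≤ Q)
    (hξ0 : 0 < ξ) (hL : 1 ≤ ⌊b * ξ ^ (-(4 / α))⌋₊) :
    ∑ j ∈ Finset.Icc 1 ⌊b * ξ ^ (-(4 / α))⌋₊,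
        (1 / T) * (Q + Real.logb 2 ((((j : ℝ) / b) ^ (-(α / 2))) / ξ ^ 2)) ≤
      (α * Real.logb 2 (Real.exp 1) / (2 * T)) * (b * ξ ^ (-(4 / α)) - 1) +
        b * ξ ^ (-(4 / α)) * Q / T := by
  set x := b * ξ ^ (-(4 / α))
  set L := ⌊x⌋₊
  have hb0 : 0 < b := one_pos.trans_le hb
  have hLx : (L : ℝ) ≤ x := Nat.floor_le (by positivity)
  set c := α / (2 * T * log 2)
  have hterm : ∀ j ∈ Icc 1 L, (1 / T) * (Q + logb 2 (((j : ℝ) / b) ^ (-(α / 2)) / ξ ^ 2)) =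
      Q / T + c * (log x - log j) := by
    intro j hj
    have hj0 : (0 : ℝ) < j := by exact_mod_cast (mem_Icc.mp hj).1
    rw [logb_rpow_div_sq_eq (by linarith) hb0 hξ0 hj0]
    simp only [c, x]
    field_simp
  have hconst : (L : ℝ) * (Q / T) ≤ x * Q / T := by
    rw [← mul_div_assoc]
    gcongr
  have hlog : c * ∑ j ∈ Icc 1 L, (log x - log j) ≤ c * (x - 1) :=
    mul_le_mul_of_nonneg_left (sum_log_sub_log_le hL hLx) (by positivity)
  have hrhs : α * logb 2 (exp 1) / (2 * T) = c := by
    rw [logb, log_exp]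
    simp only [c]
    field_simp
  rw [sum_congr rfl hterm, sum_add_distrib, sum_const, Nat.card_Icc, Nat.add_sub_cancel,
    nsmul_eq_mul, ← mul_sum, hrhs]
  linarith

theorem stmt16 (α b T Q ξ : ℝ) (hα : 2 < α) (hb : 1 ≤ b) (hT : 0 < T) (hQ : 0 ≤ Q)
    (hξ0 : 0 < ξ) (hξ1 : ξ ≤ 1) (hL : 1 ≤ ⌊b * ξ ^ (-(4 / α))⌋₊) :
    ∑ j ∈ Finset.Icc 1 ⌊b * ξ ^ (-(4 / α))⌋₊,
        (1 / T) * (Q + Real.logb 2 ((((j : ℝ) / b) ^ (-(α / 2))) / ξ ^ 2)) ≤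
      (α * Real.logb 2 (Real.exp 1) / (2 * T)) * (b * ξ ^ (-(4 / α)) - 1) +
        b * ξ ^ (-(4 / α)) * Q / T :=
  stmt16_general α b T Q ξ hα hb hT hQ hξ0 hL
end

section
/- Let f(ρ) = E[log₂(1 + ρG/(1 + ρ·c·2^{-βT·ρ'}))] where ρ' = log₂ ρ, G > 0 is a positive random variable with E[log₂ G] finite, c > 0, β ≥ 1/T, T > 0. Then lim_{ρ→∞} f(ρ) - log₂ ρ exists in [-∞,∞) and is > -∞; in particular lim_{ρ→∞} f(ρ)/log₂ ρ = 1. -/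
open Real MeasureTheory ProbabilityTheory Filter

/-
Dividing the argument of the logarithm by ρ gives
`log₂(1 + ρG/D(ρ)) - log₂ ρ = log₂(ρ⁻¹ + G/D(ρ))`, where `D(ρ) = 1 + c ρ^{1-βT}` is the
interference-plus-noise term. Since `βT ≥ 1`, `D(ρ)` converges to a finite limit `d ≥ 1`, so the
right-hand side converges pointwise to `log₂(G/d)`; it is dominated by `C + |log₂ G|`, which is
integrable, and dominated convergence gives the finite limit of `f(ρ) - log₂ ρ`. Dividing by
`log₂ ρ → ∞` then yields `f(ρ)/log₂ ρ → 1`.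
-/

namespace Real

theorem measurable_logb {b : ℝ} : Measurable (logb b) :=
  measurable_log.div_const _

theorem rpow_neg_mul_logb {b x : ℝ} (hb₀ : 0 < b) (hb₁ : b ≠ 1) (hx : 0 < x) (t : ℝ) :
    b ^ (-(t * logb b x)) = x ^ (-t) := by
  rw [show -(t * logb b x) = logb b x * -t by ring, rpow_mul hb₀.le, rpow_logb hb₀ hb₁ hx]

theorem exists_tendsto_rpow_atTop_of_nonpos {s : ℝ} (hs : s ≤ 0) :
    ∃ l, 0 ≤ l ∧ Tendsto (fun x : ℝ => x ^ s) atTop (nhds l) := by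
  rcases hs.eq_or_lt with rfl | hs
  · exact ⟨1, zero_le_one, by simpa only [rpow_zero] using tendsto_const_nhds⟩
  · exact ⟨0, le_rfl, by simpa only [neg_neg] using tendsto_rpow_neg_atTop (neg_pos.2 hs)⟩

theorem abs_logb_add_mul_le {b u g v a a' : ℝ} (hb : 1 < b) (hu : 0 ≤ u) (hu₁ : u ≤ 1)
    (hg : 0 < g) (ha : 0 < a) (hav : a ≤ v) (hva' : v ≤ a') :
    |logb b (u + g * v)| ≤ |logb b a| + logb b (1 + a') + |logb b g| := by
  have hlow : logb b g + logb b a ≤ logb b (u + g * v) := by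
    rw [← logb_mul hg.ne' ha.ne']
    exact logb_le_logb_of_le hb (mul_pos hg ha) (by nlinarith)
  have hpos : 0 < u + g * v := add_pos_of_nonneg_of_pos hu (mul_pos hg (ha.trans_le hav))
  have hup : logb b (u + g * v) ≤ logb b (1 + a') + |logb b g| := by
    rcases le_total g 1 with hg₁ | hg₁
    · calc logb b (u + g * v) ≤ logb b (1 + a') :=
            logb_le_logb_of_le hb hpos (by nlinarith)
        _ ≤ logb b (1 + a') + |logb b g| := le_add_of_nonneg_right (abs_nonneg _)
    · calc logb b (u + g * v) ≤ logb b ((1 + a') * g) :=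
            logb_le_logb_of_le hb hpos (by nlinarith)
        _ = logb b (1 + a') + logb b g := logb_mul (by linarith) hg.ne'
        _ ≤ logb b (1 + a') + |logb b g| := by
          gcongr; exact le_abs_self _
  have : 0 ≤ logb b (1 + a') := logb_nonneg hb (by linarith)
  rw [abs_le]
  constructor <;> linarith [neg_abs_le (logb b g), neg_abs_le (logb b a), abs_nonneg (logb b a),
    abs_nonneg (logb b g)]

theorem tendsto_div_logb_of_tendsto_sub_logb {b L : ℝ} (hb : 1 < b) {f : ℝ → ℝ}
    (h : Tendsto (fun x => f x - logb b x) atTop (nhds L)) :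
    Tendsto (fun x => f x / logb b x) atTop (nhds 1) := by
  have h₁ := (h.div_atTop (tendsto_logb_atTop hb)).add_const 1
  rw [zero_add] at h₁
  refine h₁.congr' ?_
  filter_upwards [eventually_gt_atTop 1] with x hx
  rw [sub_div, div_self (logb_pos hb hx).ne', sub_add_cancel]

theorem logb_one_add_mul_div {b ρ g D : ℝ} (hρ : 0 < ρ) (hg : 0 < g) (hD : 0 < D) :
    logb b (1 + ρ * g / D) = logb b ρ + logb b (ρ⁻¹ + g * D⁻¹) := by
  rw [← logb_mul hρ.ne' (by positivity)]
  congr 1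
  field_simp

end Real

section DominatedLogb

variable {Ω ι : Type*} {l : Filter ι} {b v₀ : ℝ} {G : Ω → ℝ} {u v : ι → ℝ}

theorem exists_eventually_abs_logb_add_mul_le (hb : 1 < b) (hG : ∀ ω, 0 < G ω)
    (hu : Tendsto u l (nhds 0)) (hu₀ : ∀ᶠ i in l, 0 ≤ u i) (hv : Tendsto v l (nhds v₀))
    (hv₀ : 0 < v₀) :
    ∃ C, ∀ᶠ i in l, ∀ ω, |logb b (u i + G ω * v i)| ≤ C + |logb b (G ω)| := by
  refine ⟨|logb b (v₀ / 2)| + logb b (1 + 2 * v₀), ?_⟩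
  filter_upwards [hu₀, hu.eventually_le_const one_pos,
    hv.eventually (Icc_mem_nhds (half_lt_self hv₀) (by linarith : v₀ < 2 * v₀))] with i hu₀ hu₁ ⟨hlo, hhi⟩ ω
  exact abs_logb_add_mul_le hb hu₀ hu₁ (hG ω) (by positivity) hlo hhi

variable [MeasurableSpace Ω] {μ : Measure Ω} [IsFiniteMeasure μ]

theorem eventually_integrable_logb_add_mul (hb : 1 < b) (hGm : Measurable G)
    (hG : ∀ ω, 0 < G ω) (hGint : Integrable (fun ω => logb b (G ω)) μ)
    (hu : Tendsto u l (nhds 0)) (hu₀ : ∀ᶠ i in l, 0 ≤ u i) (hv : Tendsto v l (nhds v₀))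
    (hv₀ : 0 < v₀) :
    ∀ᶠ i in l, Integrable (fun ω => logb b (u i + G ω * v i)) μ := by
  obtain ⟨C, hC⟩ := exists_eventually_abs_logb_add_mul_le hb hG hu hu₀ hv hv₀
  filter_upwards [hC] with i hi
  exact ((integrable_const C).add hGint.abs).mono'
    (measurable_logb.comp (by fun_prop)).aestronglyMeasurable (ae_of_all _ hi)

theorem tendsto_integral_logb_add_mul [l.IsCountablyGenerated] (hb : 1 < b) (hGm : Measurable G)
    (hG : ∀ ω, 0 < G ω) (hGint : Integrable (fun ω => logb b (G ω)) μ)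
    (hu : Tendsto u l (nhds 0)) (hu₀ : ∀ᶠ i in l, 0 ≤ u i) (hv : Tendsto v l (nhds v₀))
    (hv₀ : 0 < v₀) :
    Tendsto (fun i => ∫ ω, logb b (u i + G ω * v i) ∂μ) l
      (nhds (∫ ω, logb b (G ω * v₀) ∂μ)) := by
  obtain ⟨C, hC⟩ := exists_eventually_abs_logb_add_mul_le hb hG hu hu₀ hv hv₀
  refine tendsto_integral_filter_of_dominated_convergence (fun ω => C + |logb b (G ω)|)
    (Eventually.of_forall fun i => (measurable_logb.comp (by fun_prop)).aestronglyMeasurable)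
    (hC.mono fun i hi => ae_of_all _ hi) ((integrable_const C).add hGint.abs)
    (ae_of_all _ fun ω => ?_)
  simpa only [zero_add] using (hu.add (hv.const_mul (G ω))).logb (by have := hG ω; positivity)

end DominatedLogb

theorem tendsto_integral_logb_one_add_mul_div_sub_logb {Ω : Type*} [MeasurableSpace Ω]
    {μ : Measure Ω} [IsProbabilityMeasure μ] {b d : ℝ} {G : Ω → ℝ} {D : ℝ → ℝ} (hb : 1 < b)
    (hGm : Measurable G) (hG : ∀ ω, 0 < G ω) (hGint : Integrable (fun ω => logb b (G ω)) μ)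
    (hD : Tendsto D atTop (nhds d)) (hd : 0 < d) :
    Tendsto (fun ρ => (∫ ω, logb b (1 + ρ * G ω / D ρ) ∂μ) - logb b ρ) atTop
      (nhds (∫ ω, logb b (G ω * d⁻¹) ∂μ)) := by
  have hu : Tendsto (fun ρ : ℝ => ρ⁻¹) atTop (nhds 0) := tendsto_inv_atTop_zero
  have hu₀ : ∀ᶠ ρ : ℝ in atTop, 0 ≤ ρ⁻¹ := eventually_ge_atTop 0 |>.mono fun ρ => inv_nonneg.2
  have hv : Tendsto (fun ρ => (D ρ)⁻¹) atTop (nhds d⁻¹) := hD.inv₀ hd.ne'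
  refine (tendsto_integral_logb_add_mul hb hGm hG hGint hu hu₀ hv (inv_pos.2 hd)).congr' ?_
  filter_upwards [eventually_integrable_logb_add_mul hb hGm hG hGint hu hu₀ hv (inv_pos.2 hd),
    eventually_gt_atTop 0, hD.eventually_const_lt hd] with ρ hint hρ hDρ
  simp_rw [logb_one_add_mul_div hρ (hG _) hDρ]
  rw [integral_add (integrable_const _) hint, integral_const, probReal_univ, one_smul,
    add_sub_cancel_left]

theorem exists_tendsto_one_add_mul_mul_rpow_neg_mul_logb {b c t : ℝ} (hb₀ : 0 < b) (hb₁ : b ≠ 1)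
    (hc : 0 ≤ c) (ht : 1 ≤ t) :
    ∃ d, 0 < d ∧ Tendsto (fun ρ : ℝ => 1 + ρ * c * b ^ (-(t * logb b ρ))) atTop (nhds d) := by
  obtain ⟨l, hl, hlim⟩ := exists_tendsto_rpow_atTop_of_nonpos (sub_nonpos.2 ht)
  refine ⟨1 + c * l, by positivity, (tendsto_const_nhds.add (hlim.const_mul c)).congr' ?_⟩
  filter_upwards [eventually_gt_atTop 0] with ρ hρ
  rw [rpow_neg_mul_logb hb₀ hb₁ hρ, sub_eq_add_neg, rpow_add hρ, rpow_one]
  ring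

theorem stmt19 {Ω : Type*} [MeasureSpace Ω] [IsProbabilityMeasure (ℙ : Measure Ω)]
    (c β T : ℝ) (hc : 0 < c) (hT : 0 < T) (hβ : 1 / T ≤ β)
    (G : Ω → ℝ) (hGmeas : Measurable G) (hGpos : ∀ ω, 0 < G ω)
    (hGint : Integrable (fun ω => Real.logb 2 (G ω))) :
    (∃ Lv : ℝ,
      Tendsto
        (fun ρ : ℝ =>
          (∫ ω, Real.logb 2
              (1 + ρ * G ω / (1 + ρ * c * (2 : ℝ) ^ (-(β * T * Real.logb 2 ρ))))) -
            Real.logb 2 ρ) atTop (nhds Lv)) ∧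
    Tendsto
      (fun ρ : ℝ =>
        (∫ ω, Real.logb 2
            (1 + ρ * G ω / (1 + ρ * c * (2 : ℝ) ^ (-(β * T * Real.logb 2 ρ))))) /
          Real.logb 2 ρ) atTop (nhds 1) := by
  have ht : 1 ≤ β * T := by rwa [div_le_iff₀ hT] at hβ
  obtain ⟨d, hd, hD⟩ :=
    exists_tendsto_one_add_mul_mul_rpow_neg_mul_logb two_pos (by norm_num) hc.le ht
  have hlim := tendsto_integral_logb_one_add_mul_div_sub_logb one_lt_two hGmeas hGpos hGint hD hd
  exact ⟨⟨_, hlim⟩, tendsto_div_logb_of_tendsto_sub_logb one_lt_two hlim⟩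
end
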